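/- The maximum over p ∈ [0, 1/2] of H(p)/(1/(1−ε) + p) is positive for every ε ∈ [0,1), and for ε = 0 it equals max_{p∈[0,1/2]} H(p)/(1+p), the capacity of the (1,∞)-RLL input-constrained noiseless binary channel, which equals log₂ φ where φ is the golden ratio. -/

import Mathlib

/-! The maximiser of `H(q)/(1+q)` is `p = φ⁻²`, for which `1 - p = φ⁻¹`. Gibbs' inequality
against the Bernoulli(`p`) distribution gives `H(q) ≤ -q log p - (1-q) log (1-p) = (1+q) log φ`,
with equality at `q = p`. For general `ε`, a maximiser exists by compactness, and the value at
`q = 1/2` is already positive. -/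

/-- Binary entropy in bits. -/
noncomputable def binEnt (p : ℝ) : ℝ :=
  -(p * Real.logb 2 p) - ((1 - p) * Real.logb 2 (1 - p))

open Real Set
open scoped goldenRatio

lemma sub_le_mul_log_sub_log {p q : ℝ} (hp : 0 < p) (hq : 0 ≤ q) :
    q - p ≤ q * (log q - log p) := by
  rcases hq.eq_or_lt with rfl | hq
  · simpa using hp.le
  have := one_sub_inv_le_log_of_pos (div_pos hq hp)
  rw [log_div hq.ne' hp.ne', inv_div] at this
  calc q - p = q * (1 - p / q) := by field_simp
    _ ≤ q * (log q - log p) := by gcongr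

lemma binEntropy_le_crossEntropy {p q : ℝ} (hp₀ : 0 < p) (hp₁ : p < 1) (hq₀ : 0 ≤ q)
    (hq₁ : q ≤ 1) : binEntropy q ≤ -(q * log p) - (1 - q) * log (1 - p) := by
  have h := sub_le_mul_log_sub_log hp₀ hq₀
  have h' := sub_le_mul_log_sub_log (sub_pos.2 hp₁) (sub_nonneg.2 hq₁)
  simp only [binEntropy, log_inv]
  linarith

lemma one_sub_inv_goldenRatio_sq : 1 - φ⁻¹ ^ 2 = φ⁻¹ := by
  rw [inv_goldenRatio, neg_sq, goldenConj_sq]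
  ring

lemma binEntropy_le_one_add_mul_log_goldenRatio {q : ℝ} (hq₀ : 0 ≤ q) (hq₁ : q ≤ 1) :
    binEntropy q ≤ (1 + q) * log φ := by
  have hp₀ : 0 < φ⁻¹ ^ 2 := by positivity
  have hp₁ : φ⁻¹ ^ 2 < 1 := by rw [← sub_pos, one_sub_inv_goldenRatio_sq]; positivity
  have h := binEntropy_le_crossEntropy hp₀ hp₁ hq₀ hq₁
  rw [one_sub_inv_goldenRatio_sq, log_pow, log_inv, Nat.cast_ofNat] at h
  linarith

lemma binEntropy_inv_goldenRatio_sq : binEntropy (φ⁻¹ ^ 2) = (1 + φ⁻¹ ^ 2) * log φ := by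
  rw [binEntropy, one_sub_inv_goldenRatio_sq, ← inv_pow, inv_inv, log_pow,
    Nat.cast_ofNat]
  linear_combination (-log φ) * one_sub_inv_goldenRatio_sq

lemma binEnt_eq_binEntropy_div_log_two (p : ℝ) : binEnt p = binEntropy p / log 2 := by
  simp only [binEnt, binEntropy, logb, log_inv]
  ring

lemma continuous_binEnt : Continuous binEnt := by
  simpa only [← funext binEnt_eq_binEntropy_div_log_two] using
    binEntropy_continuous.div_const (log 2)

lemma binEnt_one_half : binEnt (1 / 2) = 1 := by
  rw [binEnt_eq_binEntropy_div_log_two, one_div, binEntropy_two_inv,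
    div_self (log_pos one_lt_two).ne']

lemma exists_isMaxOn_binEnt_div_add {c : ℝ} (hc : 0 < c) :
    ∃ p ∈ Icc (0 : ℝ) (1 / 2), IsMaxOn (fun q ↦ binEnt q / (c + q)) (Icc 0 (1 / 2)) p ∧
      0 < binEnt p / (c + p) := by
  have hcont : ContinuousOn (fun q ↦ binEnt q / (c + q)) (Icc 0 (1 / 2)) :=
    continuous_binEnt.continuousOn.div (by fun_prop) fun q hq ↦ by linarith [hq.1]
  obtain ⟨p, hp, hmax⟩ := isCompact_Icc.exists_isMaxOn (nonempty_Icc.2 (by norm_num)) hcont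
  have hhalf : (1 / 2 : ℝ) ∈ Icc (0 : ℝ) (1 / 2) := by norm_num
  refine ⟨p, hp, hmax, lt_of_lt_of_le ?_ (hmax hhalf)⟩
  show 0 < binEnt (1 / 2) / (c + 1 / 2)
  rw [binEnt_one_half]
  positivity

lemma binEnt_div_one_add_le {q : ℝ} (hq₀ : 0 ≤ q) (hq₁ : q ≤ 1) :
    binEnt q / (1 + q) ≤ logb 2 φ := by
  rw [div_le_iff₀ (by positivity), binEnt_eq_binEntropy_div_log_two, logb, mul_comm,
    ← mul_div_assoc]
  exact div_le_div_of_nonneg_right (binEntropy_le_one_add_mul_log_goldenRatio hq₀ hq₁)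
    (log_pos one_lt_two).le

lemma binEnt_div_one_add_inv_goldenRatio_sq :
    binEnt (φ⁻¹ ^ 2) / (1 + φ⁻¹ ^ 2) = logb 2 φ := by
  rw [binEnt_eq_binEntropy_div_log_two, binEntropy_inv_goldenRatio_sq, logb]
  field_simp

lemma inv_goldenRatio_sq_mem_Icc : φ⁻¹ ^ 2 ∈ Icc (0 : ℝ) (1 / 2) := by
  refine ⟨by positivity, ?_⟩
  rw [← sub_le_sub_iff_left 1, one_sub_inv_goldenRatio_sq, le_inv_comm₀ (by norm_num)
    goldenRatio_pos]
  linarith [goldenRatio_lt_two]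

theorem constrained_bec_capacity :
    (∀ ε ∈ Set.Ico (0 : ℝ) 1,
      ∃ p ∈ Set.Icc (0 : ℝ) (1 / 2),
        (∀ q ∈ Set.Icc (0 : ℝ) (1 / 2),
          binEnt q / (1 / (1 - ε) + q) ≤ binEnt p / (1 / (1 - ε) + p)) ∧
        0 < binEnt p / (1 / (1 - ε) + p)) ∧
    (∃ p ∈ Set.Icc (0 : ℝ) (1 / 2),
      (∀ q ∈ Set.Icc (0 : ℝ) (1 / 2),
        binEnt q / (1 + q) ≤ binEnt p / (1 + p)) ∧
      binEnt p / (1 + p) = Real.logb 2 ((1 + Real.sqrt 5) / 2)) := by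
  refine ⟨fun ε hε ↦ ?_, ?_⟩
  · exact exists_isMaxOn_binEnt_div_add (one_div_pos.2 (sub_pos.2 hε.2))
  · refine ⟨φ⁻¹ ^ 2, inv_goldenRatio_sq_mem_Icc, fun q hq ↦ ?_,
      binEnt_div_one_add_inv_goldenRatio_sq⟩
    rw [binEnt_div_one_add_inv_goldenRatio_sq]
    exact binEnt_div_one_add_le hq.1 (hq.2.trans one_half_lt_one.le)
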